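/- arXiv:1009.5785 — 2 statements merged into one kernel-verified Lean document; each statement's English description precedes it below -/
import Mathlib

section
/- Let n ≥ 3 be an integer, c ∈ [0,1), and a = (a_0, a_1, …, a_n) ∈ ℝ^{n+1}. If 0 = a_0 = a_1 ≤ min_{2 ≤ l ≤ n} a_l < max_{2 ≤ l ≤ n} a_l, then the function F_{c,a} : [0,1] → ℝ defined by F_{c,a}(t) = Σ_{i=0}^{n} a_i · φ_{i,n}((t−c)/(1−c)) for t ∈ (c,1] and F_{c,a}(t) = 0 for t ∈ [0,c] is continuously differentiable on [0,1] (derivatives at 0 and 1 being one-sided), is constantly 0 on [0,c], and is strictly positive on (c,1). -/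
/-- Bernstein basis polynomial `φ_{i,n}(t) = C(n,i) t^i (1-t)^{n-i}`. -/
noncomputable def phi (n i : ℕ) (t : ℝ) : ℝ :=
  (n.choose i : ℝ) * t ^ i * (1 - t) ^ (n - i)

/-- `F_{c,a}(t) = Σ_{i=0}^{n} a_i φ_{i,n}((t-c)/(1-c)) 1_{(c,1]}(t)` on `[0,1]`. -/
noncomputable def Fca (c : ℝ) (n : ℕ) (a : ℕ → ℝ) (t : ℝ) : ℝ :=
  if c < t then ∑ i ∈ Finset.range (n + 1), a i * phi n i ((t - c) / (1 - c)) else 0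

/-!
Since `a₀ = a₁ = 0`, the Bernstein combination `Σ aᵢ φ_{i,n}(x)` is `x²` times a polynomial, so
`F_{c,a}(t) = max(s, 0)² · q(s)` with `s = (t - c)/(1 - c)` and `q` a polynomial; `x ↦ max(x, 0)²`
is `C¹` with derivative `2 max(x, 0)`. Positivity on `(c, 1)` holds termwise: every `φ_{i,n}` is
positive on `(0, 1)`, all `aᵢ` are nonnegative and one of them is positive.
-/

open Finset

noncomputable def posPartSq (x : ℝ) : ℝ := max x 0 ^ 2

lemma hasDerivAt_posPartSq (x : ℝ) : HasDerivAt posPartSq (2 * max x 0) x := by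
  -- away from `0` the function is locally `0` or `z²`; at `0` the continuous derivative extends
  refine hasDerivAt_of_hasDerivAt_of_ne' (f := posPartSq) (g := fun y => 2 * max y 0) (x := 0)
    (fun y hy => ?_) (by unfold posPartSq; fun_prop) (by fun_prop) x
  rcases hy.lt_or_gt with hneg | hpos
  · have h_eq : posPartSq =ᶠ[nhds y] fun _ => 0 := by
      filter_upwards [Iio_mem_nhds hneg] with z hz
      simp [posPartSq, max_eq_right (le_of_lt (Set.mem_Iio.1 hz))]
    simpa [max_eq_right hneg.le] using (hasDerivAt_const y (0 : ℝ)).congr_of_eventuallyEq h_eq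
  · have h_eq : posPartSq =ᶠ[nhds y] fun z => z ^ 2 := by
      filter_upwards [Ioi_mem_nhds hpos] with z hz
      simp [posPartSq, max_eq_left (le_of_lt (Set.mem_Ioi.1 hz))]
    simpa [max_eq_left hpos.le, mul_comm] using (hasDerivAt_pow 2 y).congr_of_eventuallyEq h_eq

lemma contDiff_posPartSq : ContDiff ℝ 1 posPartSq := by
  rw [contDiff_one_iff_deriv]
  refine ⟨fun x => (hasDerivAt_posPartSq x).differentiableAt, ?_⟩
  rw [funext fun x => (hasDerivAt_posPartSq x).deriv]
  fun_prop

lemma phi_nonneg {n i : ℕ} {x : ℝ} (hx0 : 0 ≤ x) (hx1 : x ≤ 1) : 0 ≤ phi n i x := by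
  unfold phi
  have : 0 ≤ 1 - x := by linarith
  positivity

lemma phi_pos {n i : ℕ} (hi : i ≤ n) {x : ℝ} (hx0 : 0 < x) (hx1 : x < 1) : 0 < phi n i x := by
  unfold phi
  have : (0 : ℝ) < n.choose i := by exact_mod_cast Nat.choose_pos hi
  have : 0 < 1 - x := by linarith
  positivity

lemma sum_mul_phi_pos {n : ℕ} {a : ℕ → ℝ} (ha : ∀ i ≤ n, 0 ≤ a i) (hpos : ∃ l ≤ n, 0 < a l)
    {x : ℝ} (hx0 : 0 < x) (hx1 : x < 1) : 0 < ∑ i ∈ range (n + 1), a i * phi n i x := by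
  obtain ⟨l, hl, hal⟩ := hpos
  refine sum_pos' (fun i hi => ?_) ⟨l, mem_range.2 (Nat.lt_succ_of_le hl), ?_⟩
  · exact mul_nonneg (ha i (Nat.le_of_lt_succ (mem_range.1 hi))) (phi_nonneg hx0.le hx1.le)
  · exact mul_pos hal (phi_pos hl hx0 hx1)

/-- `Σ aᵢ φ_{i,n}(x) / x²` when `a₀ = a₁ = 0` (see `sum_mul_phi_eq_sq_mul`). -/
noncomputable def bernsteinDivSq (n : ℕ) (a : ℕ → ℝ) (x : ℝ) : ℝ :=
  ∑ i ∈ range (n + 1), a i * n.choose i * x ^ (i - 2) * (1 - x) ^ (n - i)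

lemma contDiff_bernsteinDivSq (n : ℕ) (a : ℕ → ℝ) {k : WithTop ℕ∞} :
    ContDiff ℝ k (bernsteinDivSq n a) := by
  unfold bernsteinDivSq
  fun_prop

lemma sum_mul_phi_eq_sq_mul {n : ℕ} {a : ℕ → ℝ} (ha0 : a 0 = 0) (ha1 : a 1 = 0) (x : ℝ) :
    ∑ i ∈ range (n + 1), a i * phi n i x = x ^ 2 * bernsteinDivSq n a x := by
  rw [bernsteinDivSq, mul_sum]
  refine sum_congr rfl fun i _ => ?_
  rcases Nat.lt_or_ge i 2 with hi | hi
  · interval_cases i <;> simp [ha0, ha1]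
  · rw [phi, ← Nat.sub_add_cancel hi, pow_add, Nat.add_sub_cancel]
    ring

lemma Fca_eq_of_le {c t : ℝ} (ht : t ≤ c) (n : ℕ) (a : ℕ → ℝ) : Fca c n a t = 0 :=
  if_neg (not_lt.2 ht)

lemma Fca_eq_posPartSq_mul {c : ℝ} (hc : c < 1) {n : ℕ} {a : ℕ → ℝ} (ha0 : a 0 = 0)
    (ha1 : a 1 = 0) :
    Fca c n a = fun t =>
      posPartSq ((t - c) / (1 - c)) * bernsteinDivSq n a ((t - c) / (1 - c)) := by
  have hc' : 0 < 1 - c := sub_pos.2 hc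
  funext t
  by_cases ht : c < t
  · have hs : 0 ≤ (t - c) / (1 - c) := div_nonneg (sub_nonneg.2 ht.le) hc'.le
    rw [Fca, if_pos ht, sum_mul_phi_eq_sq_mul ha0 ha1, posPartSq, max_eq_left hs]
  · have hs : (t - c) / (1 - c) ≤ 0 := div_nonpos_of_nonpos_of_nonneg (by linarith) hc'.le
    rw [Fca_eq_of_le (not_lt.1 ht), posPartSq, max_eq_right hs]
    simp

lemma contDiff_Fca {c : ℝ} (hc : c < 1) {n : ℕ} {a : ℕ → ℝ} (ha0 : a 0 = 0) (ha1 : a 1 = 0) :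
    ContDiff ℝ 1 (Fca c n a) := by
  rw [Fca_eq_posPartSq_mul hc ha0 ha1]
  have hs : ContDiff ℝ 1 fun t : ℝ => (t - c) / (1 - c) := by fun_prop
  exact (contDiff_posPartSq.comp hs).mul ((contDiff_bernsteinDivSq n a).comp hs)

lemma Fca_pos {c : ℝ} {n : ℕ} {a : ℕ → ℝ} (ha : ∀ i ≤ n, 0 ≤ a i) (hpos : ∃ l ≤ n, 0 < a l)
    {t : ℝ} (hct : c < t) (ht1 : t < 1) : 0 < Fca c n a t := by
  have hc' : 0 < 1 - c := by linarith
  rw [Fca, if_pos hct]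
  exact sum_mul_phi_pos ha hpos (div_pos (sub_pos.2 hct) hc') ((div_lt_one hc').2 (by linarith))

theorem stmt0_general (n : ℕ) (c : ℝ) (hc : c ∈ Set.Ico (0 : ℝ) 1)
    (a : ℕ → ℝ) (ha0 : a 0 = 0) (ha1 : a 1 = 0)
    (hnonneg : ∀ l, 2 ≤ l → l ≤ n → 0 ≤ a l)
    (hminmax : ∃ l₁ l₂, 2 ≤ l₁ ∧ l₁ ≤ n ∧ 2 ≤ l₂ ∧ l₂ ≤ n ∧ a l₁ < a l₂) :
    ContDiffOn ℝ 1 (Fca c n a) (Set.Icc 0 1) ∧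
    (∀ t ∈ Set.Icc 0 c, Fca c n a t = 0) ∧
    (∀ t ∈ Set.Ioo c 1, 0 < Fca c n a t) := by
  have ha : ∀ i ≤ n, 0 ≤ a i := fun i hi => by
    rcases Nat.lt_or_ge i 2 with h2 | h2
    · interval_cases i <;> simp [ha0, ha1]
    · exact hnonneg i h2 hi
  have hpos : ∃ l ≤ n, 0 < a l := by
    obtain ⟨l₁, l₂, hl₁, hl₁n, -, hl₂n, hlt⟩ := hminmax
    exact ⟨l₂, hl₂n, (hnonneg l₁ hl₁ hl₁n).trans_lt hlt⟩
  exact ⟨(contDiff_Fca hc.2 ha0 ha1).contDiffOn, fun t ht => Fca_eq_of_le ht.2 n a,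
    fun t ht => Fca_pos ha hpos ht.1 ht.2⟩

theorem stmt0 (n : ℕ) (hn : 3 ≤ n) (c : ℝ) (hc : c ∈ Set.Ico (0 : ℝ) 1)
    (a : ℕ → ℝ) (ha0 : a 0 = 0) (ha1 : a 1 = 0)
    (hnonneg : ∀ l, 2 ≤ l → l ≤ n → 0 ≤ a l)
    (hminmax : ∃ l₁ l₂, 2 ≤ l₁ ∧ l₁ ≤ n ∧ 2 ≤ l₂ ∧ l₂ ≤ n ∧ a l₁ < a l₂) :
    ContDiffOn ℝ 1 (Fca c n a) (Set.Icc 0 1) ∧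
    (∀ t ∈ Set.Icc 0 c, Fca c n a t = 0) ∧
    (∀ t ∈ Set.Ioo c 1, 0 < Fca c n a t) :=
  stmt0_general n c hc a ha0 ha1 hnonneg hminmax
end

section
/- Let f : [0,1] → ℝ be continuously differentiable (derivatives at 0 and 1 being one-sided) with f(0) = 0 and f'(0) = 0. For each integer n ≥ 2 define G_n(t) = Σ_{i=2}^{n} f(i/n) · φ_{i,n}(t), i.e., the n-th Bernstein polynomial of f with the coefficients of φ_{0,n} and φ_{1,n} replaced by 0. Then e(G_n, f) = ‖G_n − f‖_∞ + ‖G_n' − f'‖_∞ → 0 as n → ∞. -/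
/-- `G_n(t) = Σ_{i=2}^{n} f(i/n) φ_{i,n}(t)`: the `n`-th Bernstein polynomial of `f`
with the coefficients of `φ_{0,n}` and `φ_{1,n}` replaced by `0`. -/
noncomputable def G (f : ℝ → ℝ) (n : ℕ) (t : ℝ) : ℝ :=
  ∑ i ∈ Finset.Icc 2 n, f ((i : ℝ) / (n : ℝ)) * phi n i t

/-- `e(f,g) = ‖f - g‖_∞ + ‖f' - g'‖_∞` on `[0,1]`, with one-sided derivatives at the
endpoints (derivatives within `[0,1]`). -/
noncomputable def eDist (f g : ℝ → ℝ) : ℝ :=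
  (⨆ t : Set.Icc (0 : ℝ) 1, |f t.1 - g t.1|) +
    (⨆ t : Set.Icc (0 : ℝ) 1,
      |derivWithin f (Set.Icc 0 1) t.1 - derivWithin g (Set.Icc 0 1) t.1|)

open Filter Set Topology

lemma phi_eq_eval (n i : ℕ) (t : ℝ) : phi n i t = (bernsteinPolynomial ℝ n i).eval t := by
  simp [bernsteinPolynomial, phi]

lemma phi_nonneg_s5 {n i : ℕ} {t : ℝ} (ht : t ∈ Icc (0 : ℝ) 1) : 0 ≤ phi n i t := by
  have := ht.1
  have : 0 ≤ 1 - t := sub_nonneg.2 ht.2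
  unfold phi
  positivity

lemma phi_of_lt {n i : ℕ} (h : n < i) (t : ℝ) : phi n i t = 0 := by
  simp [phi, Nat.choose_eq_zero_of_lt h]

lemma sum_phi (n : ℕ) (t : ℝ) : ∑ i ∈ Finset.range (n + 1), phi n i t = 1 := by
  simpa [Polynomial.eval_finsetSum, ← phi_eq_eval] using
    congrArg (Polynomial.eval t) (bernsteinPolynomial.sum ℝ n)

lemma hasDerivAt_phi (n i : ℕ) (t : ℝ) :
    HasDerivAt (phi n i) ((Polynomial.derivative (bernsteinPolynomial ℝ n i)).eval t) t := by
  simpa only [← phi_eq_eval] using (bernsteinPolynomial ℝ n i).hasDerivAt t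

noncomputable def bernsteinSum (c : ℕ → ℝ) (n : ℕ) (t : ℝ) : ℝ :=
  ∑ i ∈ Finset.range (n + 1), c i * phi n i t

lemma abs_bernsteinSum_sub_le {c d : ℕ → ℝ} {n : ℕ} {η : ℝ}
    (h : ∀ i ≤ n, |c i - d i| ≤ η) {t : ℝ} (ht : t ∈ Icc (0 : ℝ) 1) :
    |bernsteinSum c n t - bernsteinSum d n t| ≤ η :=
  calc |bernsteinSum c n t - bernsteinSum d n t|
      = |∑ i ∈ Finset.range (n + 1), (c i - d i) * phi n i t| := by
        simp only [bernsteinSum, ← Finset.sum_sub_distrib, sub_mul]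
    _ ≤ ∑ i ∈ Finset.range (n + 1), |c i - d i| * phi n i t := by
        refine (Finset.abs_sum_le_sum_abs _ _).trans_eq (Finset.sum_congr rfl fun i _ => ?_)
        rw [abs_mul, abs_of_nonneg (phi_nonneg_s5 ht)]
    _ ≤ ∑ i ∈ Finset.range (n + 1), η * phi n i t :=
        Finset.sum_le_sum fun i hi => mul_le_mul_of_nonneg_right
          (h i (Nat.lt_succ_iff.1 (Finset.mem_range.1 hi))) (phi_nonneg_s5 ht)
    _ = η := by rw [← Finset.mul_sum, sum_phi, mul_one]

lemma hasDerivAt_bernsteinSum (c : ℕ → ℝ) (n : ℕ) (t : ℝ) :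
    HasDerivAt (bernsteinSum c (n + 1))
      (bernsteinSum (fun i => (n + 1) * (c (i + 1) - c i)) n t) t := by
  have h : HasDerivAt (bernsteinSum c (n + 1)) (∑ i ∈ Finset.range (n + 2),
      c i * (Polynomial.derivative (bernsteinPolynomial ℝ (n + 1) i)).eval t) t :=
    HasDerivAt.fun_sum fun i _ => (hasDerivAt_phi (n + 1) i t).const_mul (c i)
  refine h.congr_deriv ?_
  have shift : ∑ i ∈ Finset.range (n + 1), c (i + 1) * phi n (i + 1) t + c 0 * phi n 0 t
      = ∑ i ∈ Finset.range (n + 1), c i * phi n i t := by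
    rw [← Finset.sum_range_succ' (fun i => c i * phi n i t), Finset.sum_range_succ,
      phi_of_lt (Nat.lt_succ_self n), mul_zero, add_zero]
  simp only [Finset.sum_range_succ' _ (n + 1), bernsteinPolynomial.derivative_succ_aux,
    bernsteinPolynomial.derivative_zero, Polynomial.eval_mul, Polynomial.eval_sub,
    Polynomial.eval_neg, Polynomial.eval_add, Polynomial.eval_natCast, Polynomial.eval_one,
    ← phi_eq_eval, bernsteinSum, mul_sub, sub_mul, Finset.sum_sub_distrib, Nat.add_sub_cancel,
    Nat.cast_succ, mul_assoc]
  simp only [mul_left_comm (c _), ← Finset.mul_sum]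
  linear_combination -((n : ℝ) + 1) * shift

lemma tendstoUniformlyOn_bernsteinSum_samples {g : ℝ → ℝ} (hg : ContinuousOn g (Icc 0 1)) :
    TendstoUniformlyOn (fun n : ℕ => bernsteinSum (fun i => g ((i : ℝ) / n)) n) g atTop
      (Icc 0 1) := by
  rw [tendstoUniformlyOn_iff_tendstoUniformly_comp_coe]
  convert ContinuousMap.tendsto_iff_tendstoUniformly.1
    (bernsteinApproximation_uniform ⟨(Icc (0 : ℝ) 1).domRestrict g, hg.domRestrict⟩) using 1
  · ext n x
    rw [bernsteinApproximation.apply, bernsteinSum, ← Fin.sum_univ_eq_sum_range]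
    refine Finset.sum_congr rfl fun i _ => ?_
    simp [bernstein_apply, phi, bernstein.z, mul_comm]
  · rfl

lemma tendstoUniformlyOn_bernsteinSum {g : ℝ → ℝ} (hg : ContinuousOn g (Icc 0 1))
    {c : ℕ → ℕ → ℝ}
    (hc : ∀ ε > 0, ∀ᶠ n in atTop, ∀ i ≤ n, |c n i - g ((i : ℝ) / n)| ≤ ε) :
    TendstoUniformlyOn (fun n => bernsteinSum (c n) n) g atTop (Icc 0 1) := by
  rw [Metric.tendstoUniformlyOn_iff]
  intro ε hε
  filter_upwards [Metric.tendstoUniformlyOn_iff.1 (tendstoUniformlyOn_bernsteinSum_samples hg)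
    (ε / 2) (half_pos hε), hc (ε / 2) (half_pos hε)] with n hB hcn t ht
  have hB := hB t ht
  rw [Real.dist_eq] at hB ⊢
  calc |g t - bernsteinSum (c n) n t|
      ≤ |g t - bernsteinSum (fun i => g ((i : ℝ) / n)) n t|
        + |bernsteinSum (fun i => g ((i : ℝ) / n)) n t - bernsteinSum (c n) n t| :=
          abs_sub_le _ _ _
    _ < ε / 2 + ε / 2 := add_lt_add_of_lt_of_le hB
        (abs_bernsteinSum_sub_le (fun i hi => by rw [abs_sub_comm]; exact hcn i hi) ht)
    _ = ε := add_halves ε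

lemma tendsto_iSup_abs_sub_of_tendstoUniformlyOn {ι α : Type*} {p : Filter ι}
    {F : ι → α → ℝ} {f : α → ℝ} {s : Set α} (h : TendstoUniformlyOn F f p s) :
    Tendsto (fun i => ⨆ x : s, |F i x - f x|) p (𝓝 0) := by
  rw [Metric.tendsto_nhds]
  intro ε hε
  filter_upwards [Metric.tendstoUniformlyOn_iff.1 h (ε / 2) (half_pos hε)] with i hi
  have hle : (⨆ x : s, |F i x - f x|) ≤ ε / 2 :=
    Real.iSup_le (fun x => by rw [abs_sub_comm, ← Real.dist_eq]; exact (hi x x.2).le)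
      (half_pos hε).le
  rw [Real.dist_0_eq_abs, abs_of_nonneg (Real.iSup_nonneg fun _ => abs_nonneg _)]
  linarith

lemma exists_abs_slope_sub_derivWithin_lt {f : ℝ → ℝ} (hf : ContDiffOn ℝ 1 f (Icc 0 1))
    {ε : ℝ} (hε : 0 < ε) :
    ∃ δ > 0, ∀ a b x : ℝ, 0 ≤ a → a < b → b ≤ 1 → x ∈ Icc a b → b - a < δ →
      |slope f a b - derivWithin f (Icc 0 1) x| < ε := by
  have hd : DifferentiableOn ℝ f (Icc 0 1) := hf.differentiableOn one_ne_zero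
  obtain ⟨δ, hδ, hδ'⟩ := Metric.uniformContinuousOn_iff.1
    (isCompact_Icc.uniformContinuousOn_of_continuous
      (hf.continuousOn_derivWithin (uniqueDiffOn_Icc one_pos) le_rfl)) ε hε
  refine ⟨δ, hδ, fun a b x ha hab hb hx hba => ?_⟩
  have hsub : Icc a b ⊆ Icc 0 1 := Icc_subset_Icc ha hb
  obtain ⟨ξ, hξ, hξeq⟩ := exists_hasDerivAt_eq_slope f (derivWithin f (Icc 0 1)) hab
    (hd.continuousOn.mono hsub) fun y hy => (hd y (hsub (Ioo_subset_Icc_self hy))).hasDerivWithinAt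
      |>.hasDerivAt (Icc_mem_nhds (ha.trans_lt hy.1) (hy.2.trans_le hb))
  have hξx : dist ξ x < δ := by
    rw [Real.dist_eq, abs_lt]
    constructor <;> linarith [hξ.1, hξ.2, hx.1, hx.2]
  rw [slope_def_field, ← hξeq, ← Real.dist_eq]
  exact hδ' ξ (hsub (Ioo_subset_Icc_self hξ)) x (hsub hx) hξx

lemma eventually_abs_mul_sub_sub_derivWithin_lt {f : ℝ → ℝ}
    (hf : ContDiffOn ℝ 1 f (Icc 0 1)) {ε : ℝ} (hε : 0 < ε) :
    ∀ᶠ m : ℕ in atTop, ∀ a x : ℝ, 0 ≤ a → a + 1 / (m + 1) ≤ 1 →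
      x ∈ Icc a (a + 1 / (m + 1)) →
      |(m + 1) * (f (a + 1 / (m + 1)) - f a) - derivWithin f (Icc 0 1) x| < ε := by
  obtain ⟨δ, hδ, hslope⟩ := exists_abs_slope_sub_derivWithin_lt hf hε
  filter_upwards [tendsto_one_div_add_atTop_nhds_zero_nat.eventually (gt_mem_nhds hδ)]
    with m hm a x ha hb hx
  have := hslope a (a + 1 / (m + 1)) x ha (by simp; positivity) hb hx (by simpa using hm)
  rwa [slope_def_field, add_sub_cancel_left, div_div_eq_mul_div, div_one, mul_comm] at this

noncomputable def trimmedSamples (f : ℝ → ℝ) (n i : ℕ) : ℝ :=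
  if 2 ≤ i then f ((i : ℝ) / n) else 0

lemma G_eq_bernsteinSum (f : ℝ → ℝ) (n : ℕ) :
    G f n = bernsteinSum (trimmedSamples f n) n := by
  funext t
  simp only [G, bernsteinSum, trimmedSamples, ite_mul, zero_mul, ← Finset.sum_filter]
  congr 1
  ext i
  simp only [Finset.mem_Icc, Finset.mem_filter, Finset.mem_range]
  omega

lemma abs_trimmedSamples_sub_le {f : ℝ → ℝ} (hf0 : f 0 = 0) (n i : ℕ) :
    |trimmedSamples f n i - f ((i : ℝ) / n)| ≤ |f (1 / n)| := by
  rcases i with _ | _ | i <;> simp [trimmedSamples, hf0]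

lemma abs_trimmedSamples_sub_sub_le {f : ℝ → ℝ} (hf0 : f 0 = 0) (n j : ℕ) :
    |trimmedSamples f n (j + 1) - trimmedSamples f n j
        - (f (((j : ℝ) + 1) / n) - f ((j : ℝ) / n))| ≤ |f (1 / n)| := by
  rcases j with _ | _ | j <;> simp [trimmedSamples, hf0, one_add_one_eq_two]

lemma eventually_abs_mul_trimmedSamples_sub_sub_derivWithin_le {f : ℝ → ℝ}
    (hf : ContDiffOn ℝ 1 f (Icc 0 1)) (hf0 : f 0 = 0) (hf'0 : derivWithin f (Icc 0 1) 0 = 0)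
    {ε : ℝ} (hε : 0 < ε) :
    ∀ᶠ m : ℕ in atTop, ∀ j ≤ m,
      |((m : ℝ) + 1) * (trimmedSamples f (m + 1) (j + 1) - trimmedSamples f (m + 1) j)
        - derivWithin f (Icc 0 1) ((j : ℝ) / m)| ≤ ε := by
  filter_upwards [eventually_gt_atTop 0, eventually_abs_mul_sub_sub_derivWithin_lt hf
    (half_pos hε)] with m hm hstep j hj
  have hm : (0 : ℝ) < m := Nat.cast_pos.2 hm
  have hj : (j : ℝ) ≤ m := Nat.cast_le.2 hj
  have hm1 : (0 : ℝ) < m + 1 := by positivity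
  have h0 : (m + 1) * |f (1 / (m + 1))| < ε / 2 := by
    have := hstep 0 0 le_rfl (by rw [zero_add, div_le_one hm1]; linarith)
      ⟨le_rfl, by positivity⟩
    rwa [zero_add, hf0, hf'0, sub_zero, sub_zero, abs_mul, abs_of_pos hm1] at this
  have hjm : (j : ℝ) / (m + 1) + 1 / (m + 1) = (j + 1) / (m + 1) := by ring
  have hj' := hstep (j / (m + 1)) (j / m) (by positivity)
    (by rw [hjm, div_le_one hm1]; linarith)
    ⟨div_le_div_of_nonneg_left (by positivity) hm (by linarith), by
      rw [hjm, div_le_div_iff₀ hm hm1]; linarith⟩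
  rw [hjm] at hj'
  have hdefect := abs_trimmedSamples_sub_sub_le hf0 (m + 1) j
  push_cast at hdefect ⊢
  calc _ = |(m + 1) * (trimmedSamples f (m + 1) (j + 1) - trimmedSamples f (m + 1) j
          - (f ((j + 1) / (m + 1)) - f (j / (m + 1))))
        + ((m + 1) * (f ((j + 1) / (m + 1)) - f (j / (m + 1)))
          - derivWithin f (Icc 0 1) (j / m))| := by ring_nf
    _ ≤ (m + 1) * |f (1 / (m + 1))| + ε / 2 := by
        refine (abs_add_le _ _).trans (add_le_add ?_ hj'.le)
        rw [abs_mul, abs_of_pos hm1]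
        exact mul_le_mul_of_nonneg_left hdefect hm1.le
    _ ≤ ε := by linarith

theorem stmt5 (f : ℝ → ℝ) (hf : ContDiffOn ℝ 1 f (Set.Icc 0 1))
    (hf0 : f 0 = 0) (hf'0 : derivWithin f (Set.Icc 0 1) 0 = 0) :
    Filter.Tendsto (fun n : ℕ => eDist (G f n) f) Filter.atTop (nhds 0) := by
  have hf1 : Tendsto (fun n : ℕ => f (1 / n)) atTop (𝓝 0) := by
    rw [← hf0]
    refine (hf.continuousOn.continuousWithinAt (left_mem_Icc.2 zero_le_one)).tendsto.comp
      (tendsto_nhdsWithin_iff.2 ⟨tendsto_one_div_atTop_nhds_zero_nat, ?_⟩)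
    filter_upwards [eventually_ge_atTop 1] with n hn
    exact ⟨by positivity, by rw [div_le_one (by positivity)]; exact_mod_cast hn⟩
  have hG : TendstoUniformlyOn (G f) f atTop (Icc 0 1) := by
    rw [show G f = _ from funext (G_eq_bernsteinSum f)]
    refine tendstoUniformlyOn_bernsteinSum hf.continuousOn fun ε hε => ?_
    filter_upwards [(NormedAddGroup.tendsto_nhds_zero.1 hf1) ε hε] with n hn i _
    exact (abs_trimmedSamples_sub_le hf0 n i).trans hn.le
  have hG' : TendstoUniformlyOn (fun m : ℕ => derivWithin (G f (m + 1)) (Icc 0 1))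
      (derivWithin f (Icc 0 1)) atTop (Icc 0 1) := by
    have hB := tendstoUniformlyOn_bernsteinSum
      (hf.continuousOn_derivWithin (uniqueDiffOn_Icc one_pos) le_rfl)
      fun _ hε => eventually_abs_mul_trimmedSamples_sub_sub_derivWithin_le hf hf0 hf'0 hε
    refine hB.congr ?_
    filter_upwards with m t ht
    rw [G_eq_bernsteinSum, ((hasDerivAt_bernsteinSum _ m t).hasDerivWithinAt).derivWithin
      (uniqueDiffOn_Icc one_pos t ht)]
  rw [← tendsto_add_atTop_iff_nat 1]
  simpa only [eDist, add_zero, Function.comp_def] using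
    ((tendsto_iSup_abs_sub_of_tendstoUniformlyOn hG).comp (tendsto_add_atTop_nat 1)).add
      (tendsto_iSup_abs_sub_of_tendstoUniformlyOn hG')
end
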